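/- arXiv:2002.08958 — 3 statements merged into one kernel-verified Lean document; each statement's English description precedes it below -/
import Mathlib

section
/- Let C : R^d → R^d be a (possibly randomized) compression operator taking at most 2^b distinct values, satisfying the contraction property E[‖C(x) − x‖²] ≤ α‖x‖² for all x ∈ R^d with α ∈ (0,1]. Then α · 4^{b/d} ≥ 1. -/
open MeasureTheory Metric
open scoped ENNReal NNReal

/-- uncertainty principle for biased compression operators: if a (possibly
randomized) compression `C : ℝ^d → ℝ^d` takes at most `2^b` values and satisfies
`E‖C(x) - x‖² ≤ α‖x‖²` for all `x`, then `α · 4^{b/d} ≥ 1`. -/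
theorem stmt3 {d : ℕ} (hd : 0 < d) {Ω : Type*} [MeasurableSpace Ω] (μ : Measure Ω)
    [IsProbabilityMeasure μ]
    (C : Ω → EuclideanSpace ℝ (Fin d) → EuclideanSpace ℝ (Fin d))
    (b : ℕ) (V : Finset (EuclideanSpace ℝ (Fin d))) (hV : V.card ≤ 2 ^ b)
    (hrange : ∀ t x, C t x ∈ V)
    (hmeas : ∀ x, Measurable fun t => C t x)
    (α : ℝ) (hα0 : 0 < α) (hα1 : α ≤ 1)
    (hcontr : ∀ x, ∫ t, ‖C t x - x‖ ^ 2 ∂μ ≤ α * ‖x‖ ^ 2) :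
    1 ≤ α * 4 ^ ((b : ℝ) / d) := by
  haveI : Nonempty (Fin d) := ⟨⟨0, hd⟩⟩
  have hΩ : Nonempty Ω := by
    by_contra h
    rw [not_nonempty_iff] at h
    have h1 : μ Set.univ = 1 := measure_univ
    rw [Set.univ_eq_empty_iff.mpr h, measure_empty] at h1
    exact zero_ne_one h1
  obtain ⟨ω0⟩ := hΩ
  have hVne : V.Nonempty := ⟨C ω0 0, hrange ω0 0⟩
  set s : ℝ := Real.sqrt α with hs
  have hs0 : 0 ≤ s := Real.sqrt_nonneg α
  -- net property: every point of the unit ball is within `s` of some value in `V`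
  have hnet : ∀ x : EuclideanSpace ℝ (Fin d), ‖x‖ ≤ 1 → ∃ v ∈ V, dist x v ≤ s := by
    intro x hx
    set c := V.inf' hVne (fun v => ‖v - x‖ ^ 2) with hc
    have hcle : ∀ t, c ≤ ‖C t x - x‖ ^ 2 := fun t =>
      Finset.inf'_le _ (hrange t x)
    set B := V.sup' hVne (fun v => ‖v - x‖ ^ 2) with hB
    have hInt : Integrable (fun t => ‖C t x - x‖ ^ 2) μ := by
      apply Integrable.mono' (integrable_const B)
      · exact ((((hmeas x).sub measurable_const).norm).pow_const 2).aestronglyMeasurable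
      · filter_upwards with t
        rw [Real.norm_eq_abs, abs_of_nonneg (by positivity)]
        exact Finset.le_sup' (fun v => ‖v - x‖ ^ 2) (hrange t x)
    have h1 : c ≤ ∫ t, ‖C t x - x‖ ^ 2 ∂μ := by
      have := integral_mono (integrable_const c) hInt hcle
      simpa using this
    obtain ⟨v, hvV, hveq⟩ := Finset.exists_mem_eq_inf' hVne (fun v => ‖v - x‖ ^ 2)
    refine ⟨v, hvV, ?_⟩
    have h2 : ‖v - x‖ ^ 2 ≤ α := by
      have h3 := hcontr x
      have hxx : ‖x‖ ^ 2 ≤ 1 := by nlinarith [norm_nonneg x]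
      have hx2 : α * ‖x‖ ^ 2 ≤ α := by nlinarith
      rw [← hveq]
      linarith
    calc dist x v = ‖v - x‖ := by rw [dist_eq_norm, norm_sub_rev]
    _ = Real.sqrt (‖v - x‖ ^ 2) := (Real.sqrt_sq (norm_nonneg _)).symm
    _ ≤ s := Real.sqrt_le_sqrt h2
  -- covering: the unit ball is covered by balls of radius `s` around `V`
  have hcover : closedBall (0 : EuclideanSpace ℝ (Fin d)) 1 ⊆ ⋃ v ∈ V, closedBall v s := by
    intro x hx
    rw [mem_closedBall, dist_zero_right] at hx
    obtain ⟨v, hvV, hvd⟩ := hnet x hx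
    exact Set.mem_biUnion hvV (mem_closedBall.mpr hvd)
  have hBpos : 0 < volume (ball (0 : EuclideanSpace ℝ (Fin d)) 1) :=
    measure_ball_pos _ _ one_pos
  have hBfin : volume (ball (0 : EuclideanSpace ℝ (Fin d)) 1) < ⊤ :=
    measure_ball_lt_top
  have hmeasle : (1 : ℝ≥0∞) * volume (ball (0 : EuclideanSpace ℝ (Fin d)) 1) ≤
      ((V.card : ℝ≥0∞) * ENNReal.ofReal (s ^ d)) *
        volume (ball (0 : EuclideanSpace ℝ (Fin d)) 1) := by
    rw [one_mul, mul_assoc]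
    calc volume (ball (0 : EuclideanSpace ℝ (Fin d)) 1)
        ≤ volume (closedBall (0 : EuclideanSpace ℝ (Fin d)) 1) :=
          measure_mono ball_subset_closedBall
      _ ≤ ∑ v ∈ V, volume (closedBall v s) :=
          (measure_mono hcover).trans (measure_biUnion_finset_le V _)
      _ = ∑ v ∈ V, ENNReal.ofReal (s ^ d) *
            volume (ball (0 : EuclideanSpace ℝ (Fin d)) 1) := by
          refine Finset.sum_congr rfl fun v _ => ?_
          rw [Measure.addHaar_closedBall volume v hs0, finrank_euclideanSpace_fin]
      _ = _ := by rw [Finset.sum_const, nsmul_eq_mul]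
  have hkey : (1 : ℝ≥0∞) ≤ (V.card : ℝ≥0∞) * ENNReal.ofReal (s ^ d) :=
    (ENNReal.mul_le_mul_iff_left hBpos.ne' hBfin.ne).mp hmeasle
  have hreal : (1 : ℝ) ≤ (V.card : ℝ) * s ^ d := by
    have h2 : ENNReal.ofReal 1 ≤ ENNReal.ofReal ((V.card : ℝ) * s ^ d) := by
      rwa [ENNReal.ofReal_one, ENNReal.ofReal_mul (by positivity), ENNReal.ofReal_natCast]
    exact (ENNReal.ofReal_le_ofReal_iff (by positivity)).mp h2
  -- rewrite s ^ d as a real power of α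
  have hsd : s ^ d = α ^ ((d : ℝ) / 2) := by
    rw [hs, Real.sqrt_eq_rpow, ← Real.rpow_natCast (α ^ ((1:ℝ)/2)) d,
      ← Real.rpow_mul hα0.le]
    ring_nf
  have h3 : (1 : ℝ) ≤ (2 : ℝ) ^ b * α ^ ((d : ℝ) / 2) := by
    rw [← hsd]
    refine hreal.trans (mul_le_mul_of_nonneg_right ?_ (by positivity))
    exact_mod_cast hV
  have hd' : (0 : ℝ) < d := Nat.cast_pos.mpr hd
  have h4 := Real.rpow_le_rpow (by norm_num) h3 (by positivity : (0:ℝ) ≤ 2 / d)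
  rw [Real.one_rpow, Real.mul_rpow (by positivity) (by positivity)] at h4
  have e1 : ((2 : ℝ) ^ b) ^ ((2 : ℝ) / d) = 4 ^ ((b : ℝ) / d) := by
    rw [← Real.rpow_natCast 2 b, ← Real.rpow_mul (by norm_num),
      show (4 : ℝ) = (2 : ℝ) ^ (2 : ℝ) by norm_num [Real.rpow_two],
      ← Real.rpow_mul (by norm_num)]
    ring_nf
  have e2 : (α ^ ((d : ℝ) / 2)) ^ ((2 : ℝ) / d) = α := by
    rw [← Real.rpow_mul hα0.le]
    have : (d : ℝ) / 2 * (2 / d) = 1 := by field_simp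
    rw [this, Real.rpow_one]
  rw [e1, e2] at h4
  linarith
end

section
/- Let U be a d×D matrix with orthonormal rows satisfying the restricted isometry property: ‖U v‖₂ ≤ η‖v‖₂ whenever v ∈ R^D has at most δD nonzero coordinates, with parameters δ, η ∈ (0,1). Given x ∈ R^d, define the iteration: a⁰ = 0, M₀ = ‖x‖₂/√(δD), x⁰ = x, and for t = 0,…,r−1: b = Uᵀ x^t, b̂_i = sign(b_i)·min(|b_i|, M_t), x^{t+1} = x^t − U b̂, a^{t+1} = a^t + b̂, M_{t+1} = η M_t. Then after r iterations, ‖x − U a^r‖₂ ≤ η^r ‖x‖₂ and ‖a^r‖_∞ ≤ (K/√D)‖x‖₂ with K = 1/(√δ (1−η)). -/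
/-- Euclidean norm of a vector in `ℝ^n` given as a plain function. -/
noncomputable def euclNorm {n : ℕ} (v : Fin n → ℝ) : ℝ := Real.sqrt (∑ i, v i ^ 2)

/-- One step of the algorithm of Lyubarskii–Vershynin for computing Kashin's
representation.  The state is `(a, x, M)`: current coefficients, current residual, and
current truncation level.  The step computes `b = Uᵀ x`, truncates it coordinatewise at
level `M` to get `b̂`, and updates `(a + b̂, x - U b̂, η M)`. -/
noncomputable def kashinStep {d D : ℕ} (U : Matrix (Fin d) (Fin D) ℝ) (η : ℝ)
    (s : (Fin D → ℝ) × (Fin d → ℝ) × ℝ) : (Fin D → ℝ) × (Fin d → ℝ) × ℝ :=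
  let b := U.transpose.mulVec s.2.1
  let bh := fun i => Real.sign (b i) * min |b i| s.2.2
  (s.1 + bh, s.2.1 - U.mulVec bh, η * s.2.2)

lemma euclNorm_nonneg {n : ℕ} (v : Fin n → ℝ) : 0 ≤ euclNorm v := Real.sqrt_nonneg _

lemma euclNorm_sq {n : ℕ} (v : Fin n → ℝ) : euclNorm v ^ 2 = ∑ i, v i ^ 2 :=
  Real.sq_sqrt (Finset.sum_nonneg fun i _ => sq_nonneg _)

lemma euclNorm_mono {n : ℕ} {v w : Fin n → ℝ} (h : ∀ i, |v i| ≤ |w i|) :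
    euclNorm v ≤ euclNorm w :=
  Real.sqrt_le_sqrt (Finset.sum_le_sum fun i _ => by
    have h1 := h i
    nlinarith [abs_nonneg (v i), sq_abs (v i), sq_abs (w i)])

lemma euclNorm_eq_zero' {n : ℕ} {v : Fin n → ℝ} (h : euclNorm v = 0) : v = 0 := by
  have h1 : ∑ i, v i ^ 2 = 0 := by
    have hnn : (0:ℝ) ≤ ∑ i, v i ^ 2 := Finset.sum_nonneg fun i _ => sq_nonneg _
    have h2 : ∑ i, v i ^ 2 ≤ 0 := Real.sqrt_eq_zero'.mp h
    linarith
  funext i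
  have := (Finset.sum_eq_zero_iff_of_nonneg (fun i _ => sq_nonneg (v i))).mp h1 i
    (Finset.mem_univ i)
  exact pow_eq_zero_iff (two_ne_zero) |>.mp this

open Matrix in
lemma euclNorm_tmul {d D : ℕ} (U : Matrix (Fin d) (Fin D) ℝ) (hU : U * U.transpose = 1)
    (y : Fin d → ℝ) : euclNorm (U.transpose.mulVec y) = euclNorm y := by
  unfold euclNorm
  congr 1
  have key : U.transpose.mulVec y ⬝ᵥ U.transpose.mulVec y = y ⬝ᵥ y := by
    rw [Matrix.dotProduct_mulVec, Matrix.vecMul_transpose, Matrix.mulVec_mulVec, hU,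
      Matrix.one_mulVec]
  simpa [dotProduct, sq] using key

lemma trunc_abs_le {x M : ℝ} (hM : 0 ≤ M) : |Real.sign x * min |x| M| ≤ M := by
  have h2 : |min |x| M| ≤ M := by
    rw [abs_of_nonneg (le_min (abs_nonneg x) hM)]; exact min_le_right _ _
  rcases lt_trichotomy x 0 with h | h | h
  · rw [abs_mul, Real.sign_of_neg h]; simpa using h2
  · subst h; simpa using hM
  · rw [abs_mul, Real.sign_of_pos h]; simpa using h2

lemma trunc_diff_le {x M : ℝ} (hM : 0 ≤ M) : |x - Real.sign x * min |x| M| ≤ |x| := by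
  rcases lt_trichotomy x 0 with h | h | h
  · have h1 : min |x| M ≤ -x := le_trans (min_le_left _ _) (le_of_eq (abs_of_neg h))
    have h2 : 0 ≤ min |x| M := le_min (abs_nonneg x) hM
    rw [Real.sign_of_neg h]
    set m := min |x| M with hm
    have he : x - (-1) * m = x + m := by ring
    rw [he, abs_of_nonpos (by linarith), abs_of_neg h]
    linarith
  · subst h; simp
  · have h1 : min |x| M ≤ x := le_trans (min_le_left _ _) (le_of_eq (abs_of_pos h))
    have h2 : 0 ≤ min |x| M := le_min (abs_nonneg x) hM
    rw [Real.sign_of_pos h, one_mul]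
    set m := min |x| M with hm
    rw [abs_of_nonneg (by linarith), abs_of_pos h]
    linarith

lemma trunc_eq {x M : ℝ} (h : |x| ≤ M) : Real.sign x * min |x| M = x := by
  rw [min_eq_left h]
  rcases lt_trichotomy x 0 with h' | h' | h'
  · rw [Real.sign_of_neg h', abs_of_neg h']; ring
  · subst h'; simp
  · rw [Real.sign_of_pos h', abs_of_pos h']; ring

set_option maxHeartbeats 1000000 in
/-- after `r` iterations of the algorithm, started from
`a⁰ = 0, x⁰ = x, M₀ = ‖x‖₂/√(δD)`, the coefficients `a^r` satisfy
`‖x - U a^r‖₂ ≤ η^r ‖x‖₂` and `‖a^r‖_∞ ≤ (K/√D)‖x‖₂` with `K = 1/(√δ(1-η))`,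
provided `U` has orthonormal rows and satisfies RIP with parameters `δ, η ∈ (0,1)`. -/
theorem stmt7 {d D : ℕ} (U : Matrix (Fin d) (Fin D) ℝ) (hU : U * U.transpose = 1)
    (δ η : ℝ) (hδ : δ ∈ Set.Ioo (0 : ℝ) 1) (hη : η ∈ Set.Ioo (0 : ℝ) 1)
    (hRIP : ∀ v : Fin D → ℝ, (Set.ncard {i | v i ≠ 0} : ℝ) ≤ δ * D →
      euclNorm (U.mulVec v) ≤ η * euclNorm v)
    (x : Fin d → ℝ) (r : ℕ) :
    euclNorm (x - U.mulVec (((kashinStep U η)^[r]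
        (0, x, euclNorm x / Real.sqrt (δ * D))).1)) ≤ η ^ r * euclNorm x ∧
      ∀ i, |((kashinStep U η)^[r] (0, x, euclNorm x / Real.sqrt (δ * D))).1 i| ≤
        (1 / (Real.sqrt δ * (1 - η))) / Real.sqrt D * euclNorm x := by
  obtain ⟨hδ0, hδ1⟩ := hδ
  obtain ⟨hη0, hη1⟩ := hη
  by_cases hx : euclNorm x = 0
  · -- degenerate case : x = 0
    have hx0 : x = 0 := euclNorm_eq_zero' hx
    subst hx0
    rw [hx, zero_div]
    have hfix : kashinStep U η (0, (0 : Fin d → ℝ), (0:ℝ)) = (0, 0, 0) := by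
      simp only [kashinStep, Matrix.mulVec_zero]
      refine Prod.ext ?_ (Prod.ext ?_ ?_)
      · funext i; simp
      · funext i; simp [show (fun _ : Fin D => (0:ℝ)) = 0 from rfl]
      · simp
    have hit : (kashinStep U η)^[r] (0, (0 : Fin d → ℝ), (0:ℝ)) = (0,0,0) :=
      Function.iterate_fixed hfix r
    rw [hit]
    have hz : U.mulVec (0 : Fin D → ℝ) = 0 := Matrix.mulVec_zero U
    constructor
    · rw [hz, sub_zero, hx]
      simp
    · intro i; simp [hx]
  · have hxpos : 0 < euclNorm x := lt_of_le_of_ne (euclNorm_nonneg x) (Ne.symm hx)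
    have hD : 0 < D := by
      by_contra hDn
      have hD0 : D = 0 := by omega
      subst hD0
      have hd0 : d = 0 := by
        by_contra hdn
        have hd : 0 < d := by omega
        have := congrFun (congrFun hU ⟨0, hd⟩) ⟨0, hd⟩
        simp [Matrix.mul_apply, Matrix.one_apply] at this
      subst hd0
      apply hx
      simp [euclNorm]
    set M0 : ℝ := euclNorm x / Real.sqrt (δ * D) with hM0def
    have hδD : (0:ℝ) < δ * D := by positivity
    have hsδD : (0:ℝ) < Real.sqrt (δ * D) := Real.sqrt_pos.mpr hδD
    have hM0pos : 0 < M0 := div_pos hxpos hsδD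
    have hM0sq : M0 ^ 2 = (euclNorm x) ^ 2 / (δ * D) := by
      rw [hM0def, div_pow, Real.sq_sqrt hδD.le]
    -- main invariant
    have key : ∀ t : ℕ,
        ((kashinStep U η)^[t] (0, x, M0)).2.2 = η ^ t * M0 ∧
        ((kashinStep U η)^[t] (0, x, M0)).2.1
          = x - U.mulVec ((kashinStep U η)^[t] (0, x, M0)).1 ∧
        euclNorm ((kashinStep U η)^[t] (0, x, M0)).2.1 ≤ η ^ t * euclNorm x ∧
        ∀ i, |((kashinStep U η)^[t] (0, x, M0)).1 i|
          ≤ (∑ k ∈ Finset.range t, η ^ k) * M0 := by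
      intro t
      induction t with
      | zero =>
        refine ⟨by simp, by simp [Matrix.mulVec_zero], by simp, fun i => by simp⟩
      | succ t ih =>
        obtain ⟨ihM, ihres, ihnorm, iha⟩ := ih
        set s := (kashinStep U η)^[t] (0, x, M0) with hs
        set b : Fin D → ℝ := U.transpose.mulVec s.2.1 with hb
        set bh : Fin D → ℝ := fun i => Real.sign (b i) * min |b i| s.2.2 with hbh
        have hstep : (kashinStep U η)^[t+1] (0, x, M0)
            = (s.1 + bh, s.2.1 - U.mulVec bh, η * s.2.2) := by
          rw [Function.iterate_succ_apply', ← hs]; rfl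
        have hMnn : 0 ≤ s.2.2 := by rw [ihM]; positivity
        -- norm of b equals norm of residual
        have hnb : euclNorm b = euclNorm s.2.1 := euclNorm_tmul U hU s.2.1
        -- U b = residual
        have hUb : U.mulVec b = s.2.1 := by
          rw [hb, Matrix.mulVec_mulVec, hU, Matrix.one_mulVec]
        -- sparsity of b - bh
        have hsupp : (Set.ncard {i | (b - bh) i ≠ 0} : ℝ) ≤ δ * D := by
          classical
          set T : Finset (Fin D) := Finset.univ.filter (fun i => s.2.2 < |b i|) with hT
          have hsub : {i | (b - bh) i ≠ 0} ⊆ (T : Set (Fin D)) := by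
            intro i hi
            simp only [Set.mem_setOf_eq, Pi.sub_apply] at hi
            simp only [hT, Finset.coe_filter, Finset.mem_univ, true_and, Set.mem_setOf_eq]
            by_contra hcon
            push_neg at hcon
            exact hi (by rw [hbh]; simp only [sub_eq_zero]; exact (trunc_eq hcon).symm)
          have hcard : (Set.ncard {i | (b - bh) i ≠ 0} : ℝ) ≤ T.card := by
            have := Set.ncard_le_ncard hsub (Set.toFinite _)
            rw [Set.ncard_coe_finset] at this
            exact_mod_cast this
          have hTb : (T.card : ℝ) * s.2.2 ^ 2 ≤ (η ^ t * euclNorm x) ^ 2 := by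
            calc (T.card : ℝ) * s.2.2 ^ 2 = ∑ _i ∈ T, s.2.2 ^ 2 := by
                  rw [Finset.sum_const, nsmul_eq_mul]
              _ ≤ ∑ i ∈ T, (b i) ^ 2 := by
                  refine Finset.sum_le_sum fun i hi => ?_
                  simp only [hT, Finset.mem_filter] at hi
                  nlinarith [hi.2, abs_nonneg (b i), sq_abs (b i)]
              _ ≤ ∑ i, (b i) ^ 2 :=
                  Finset.sum_le_sum_of_subset_of_nonneg (Finset.subset_univ T)
                    (fun i _ _ => sq_nonneg _)
              _ = (euclNorm b) ^ 2 := (euclNorm_sq b).symm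
              _ ≤ (η ^ t * euclNorm x) ^ 2 := by
                  rw [hnb]
                  nlinarith [euclNorm_nonneg s.2.1, ihnorm]
          have hMsq : s.2.2 ^ 2 = (η ^ t * euclNorm x) ^ 2 / (δ * D) := by
            rw [ihM, mul_pow, hM0sq]; ring
          have hq : (0:ℝ) < (η ^ t * euclNorm x) ^ 2 / (δ * D) := by positivity
          have hTδ : (T.card : ℝ) ≤ δ * D := by
            rw [hMsq] at hTb
            have hcancel : δ * D * ((η ^ t * euclNorm x) ^ 2 / (δ * D))
                = (η ^ t * euclNorm x) ^ 2 := mul_div_cancel₀ _ (ne_of_gt hδD)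
            nlinarith [hTb, hq, hcancel]
          linarith
        -- pointwise bounds
        have hbh_le : ∀ i, |bh i| ≤ s.2.2 := fun i => trunc_abs_le hMnn
        have hdiff : ∀ i, |(b - bh) i| ≤ |b i| := fun i => by
          simp only [Pi.sub_apply, hbh]
          exact trunc_diff_le hMnn
        -- new residual norm bound
        have hres_eq : s.2.1 - U.mulVec bh = U.mulVec (b - bh) := by
          rw [Matrix.mulVec_sub, hUb]
        have hnorm' : euclNorm (s.2.1 - U.mulVec bh) ≤ η ^ (t+1) * euclNorm x := by
          rw [hres_eq]
          calc euclNorm (U.mulVec (b - bh)) ≤ η * euclNorm (b - bh) := hRIP _ hsupp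
            _ ≤ η * euclNorm b := by
                have := euclNorm_mono hdiff
                nlinarith
            _ = η * euclNorm s.2.1 := by rw [hnb]
            _ ≤ η * (η ^ t * euclNorm x) := by nlinarith
            _ = η ^ (t+1) * euclNorm x := by ring
        refine ⟨?_, ?_, ?_, ?_⟩
        · rw [hstep, ihM]; ring
        · rw [hstep]
          simp only
          rw [Matrix.mulVec_add]
          rw [ihres]
          abel
        · rw [hstep]; exact hnorm'
        · intro i
          rw [hstep]
          simp only [Pi.add_apply]
          calc |s.1 i + bh i| ≤ |s.1 i| + |bh i| := abs_add_le _ _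
            _ ≤ (∑ k ∈ Finset.range t, η ^ k) * M0 + s.2.2 := add_le_add (iha i) (hbh_le i)
            _ = (∑ k ∈ Finset.range (t+1), η ^ k) * M0 := by
                rw [Finset.sum_range_succ, ihM]; ring
    obtain ⟨hM, hres, hnorm, ha⟩ := key r
    constructor
    · rw [← hres]; exact hnorm
    · intro i
      have hgeo : (∑ k ∈ Finset.range r, η ^ k) ≤ 1 / (1 - η) := by
        rw [le_div_iff₀ (by linarith)]
        have h1 : (∑ k ∈ Finset.range r, η ^ k) * (1 - η) = 1 - η ^ r := by
          linear_combination -(geom_sum_mul η r)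
        have h2 : (0:ℝ) ≤ η ^ r := pow_nonneg hη0.le r
        linarith
      have hchain : |((kashinStep U η)^[r] (0, x, M0)).1 i| ≤ (1 / (1 - η)) * M0 :=
        le_trans (ha i) (mul_le_mul_of_nonneg_right hgeo hM0pos.le)
      refine le_trans hchain (le_of_eq ?_)
      rw [hM0def, Real.sqrt_mul hδ0.le]
      have h1 : Real.sqrt δ ≠ 0 := ne_of_gt (Real.sqrt_pos.mpr hδ0)
      have h2 : Real.sqrt (D:ℝ) ≠ 0 := ne_of_gt (Real.sqrt_pos.mpr (by exact_mod_cast hD))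
      field_simp
end

section
/- For every c ∈ (0,1) there is d₀ such that for all d ≥ d₀ the following holds: assuming there exist m = 2^{cd} points of common norm R ≤ (1/c₁)·√(d / log(m/d)) (c₁ > 0 an absolute constant) whose convex hull contains the unit ball of R^d, the resulting polytope-based unbiased compressor C : S^{d−1} → R^d with b = cd bits and variance ω = R² − 1 satisfies (ω/(ω+1)) · 4^{b/d} ≤ (1 − c₁²(c − (log₂ d)/d)) · 4^c. In particular, as c → 0 and d → ∞ this quantity can be made arbitrarily close to 1, so the uncertainty principle lower bound is asymptotically tight. -/
open Filter Real

/- Since `logb 2 d = o(d)`, for large `d` the quantity `c d - logb 2 d` is positive, so the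
hypothesis on `R` squares to `c₁² (c - logb 2 d / d) ≤ 1 / R²`.  Together with
`ω / (ω + 1) = 1 - 1 / R²` and `4 ^ (b / d) = 4 ^ c` this is the claim. -/

theorem Real.eventually_logb_lt_mul {c : ℝ} (hc : 0 < c) {b : ℝ} (hb : 1 < b) :
    ∀ᶠ x : ℝ in atTop, logb b x < c * x := by
  have hlogb : 0 < log b := log_pos hb
  filter_upwards [isLittleO_log_id_atTop.bound (half_pos (mul_pos hc hlogb)),
    eventually_gt_atTop 0] with x hlog hx
  rw [norm_eq_abs, id, norm_of_nonneg hx.le] at hlog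
  rw [logb, div_lt_iff₀ hlogb]
  nlinarith [le_abs_self (log x), mul_pos (mul_pos hc hlogb) hx]

theorem sq_div_le_one_div_sq_of_le_one_div_mul_sqrt {c R t : ℝ} (hc : 0 < c) (hR : 0 < R)
    (ht : 0 < t) (h : R ≤ 1 / c * √t) : c ^ 2 / t ≤ 1 / R ^ 2 := by
  have hRc : R * c ≤ √t := by rwa [one_div, ← div_eq_inv_mul, le_div_iff₀ hc] at h
  have hsq : (R * c) ^ 2 ≤ t := by
    simpa [sq_sqrt ht.le] using pow_le_pow_left₀ (by positivity) hRc 2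
  rw [div_le_div_iff₀ ht (by positivity)]
  nlinarith

/-- asymptotic tightness of the uncertainty principle.  For every
`c ∈ (0,1)` and absolute constant `c₁ > 0` there is `d₀` such that for all `d ≥ d₀`:
if there is a polytope with `m = 2^{cd}` vertices of common norm
`R ≤ (1/c₁)·√(d / log₂(m/d))` (so `log₂(m/d) = cd - log₂ d`) whose convex hull contains the
unit ball, then the resulting polytope compressor with `b = cd` bits and variance
`ω = R² - 1` satisfies `(ω/(ω+1))·4^{b/d} ≤ (1 - c₁²(c - (log₂ d)/d))·4^c`. -/
theorem stmt15 :
    ∀ c ∈ Set.Ioo (0 : ℝ) 1, ∀ c₁ : ℝ, 0 < c₁ → ∃ d₀ : ℕ, ∀ d : ℕ, d₀ ≤ d →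
      ∀ R : ℝ, 1 < R →
        R ≤ (1 / c₁) * Real.sqrt ((d : ℝ) / (c * d - Real.logb 2 d)) →
        ∀ ω b : ℝ, ω = R ^ 2 - 1 → b = c * d →
          ω / (ω + 1) * 4 ^ (b / d) ≤
            (1 - c₁ ^ 2 * (c - Real.logb 2 d / d)) * 4 ^ c := by
  rintro c ⟨hc, -⟩ c₁ hc₁
  obtain ⟨d₀, hd₀⟩ := eventually_atTop.mp <|
    (tendsto_natCast_atTop_atTop.eventually (eventually_logb_lt_mul hc one_lt_two)).and
      (eventually_gt_atTop 0)
  refine ⟨d₀, fun d hd R hR hRle ω b hω hb => ?_⟩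
  obtain ⟨hlogb, hd_pos⟩ := hd₀ d hd
  have hd : (0 : ℝ) < d := Nat.cast_pos.2 hd_pos
  have hbound := sq_div_le_one_div_sq_of_le_one_div_mul_sqrt hc₁ (by linarith)
    (div_pos hd (sub_pos.2 hlogb)) hRle
  rw [show c₁ ^ 2 / (d / (c * d - logb 2 d)) = c₁ ^ 2 * (c - logb 2 d / d) by
    field_simp] at hbound
  rw [hω, hb, mul_div_cancel_right₀ c hd.ne', sub_add_cancel, sub_div,
    div_self (by positivity)]
  gcongr
end
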